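/- arXiv:2308.11425 — 6 statements merged into one kernel-verified Lean document; each statement's English description precedes it below -/
import Mathlib

section
/- Let T be an abelian group, V a finite-dimensional complex vector space with a nondegenerate alternating bilinear form B, and ρ : T → GL(V) a representation such that every ρ(t) is an isometry of B and such that V is the sum of its weight spaces V_χ = {v ∈ V : ρ(t)v = χ(t)v for all t ∈ T}, where χ ranges over group homomorphisms T → ℂ^×. Then there exist ρ-invariant subspaces W and W' of V with V = W ⊕ W', with B vanishing identically on W × W and on W' × W', and such that the map sending w' ∈ W' to the linear functional B(·, w') on W is a T-equivariant isomorphism from W' onto the dual representation of W. In particular ρ is isomorphic to σ ⊕ σ^∨, where σ is the action of T on W. -/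
/-!
Since `B (ρ t x) (ρ t y) = χ t * ψ t * B x y`, the weight spaces `V_χ` and `V_ψ` are
`B`-orthogonal unless `χ * ψ = 1`. So for each pair `χ ≠ χ⁻¹` one puts `V_χ` into `W` and
`V_χ⁻¹` into `W'`, and each self-dual weight space `V_χ` (`χ = χ⁻¹`) is split as a sum of two
isotropic subspaces, which any subspace of an alternating space admits (split off a hyperbolic
pair `B v w ≠ 0` and induct on the dimension). Then `W` and `W'` are invariant, isotropic and
span `V`; nondegeneracy makes the sum direct and `w' ↦ B (·, w')` injective in both directions,
hence an isomorphism `W' ≃ W^∨`, whose equivariance is the invariance of `B`.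
-/

open Module

def weightSpace {T V : Type*} [CommGroup T] [AddCommGroup V] [Module ℂ V]
    (ρ : T →* (V ≃ₗ[ℂ] V)) (χ : T →* ℂˣ) : Submodule ℂ V where
  carrier := {v | ∀ t : T, ρ t v = (χ t : ℂ) • v}
  add_mem' := by
    intro a b ha hb t
    simp [map_add, ha t, hb t, smul_add]
  zero_mem' := by intro t; simp
  smul_mem' := by
    intro c v hv t
    rw [map_smul, hv t, smul_comm]

namespace LinearMap

variable {K V : Type*} [Field K] [AddCommGroup V] [Module K V] {B : V →ₗ[K] V →ₗ[K] K}
  {U U' L : Submodule K V}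

theorem SeparatingLeft.eq_zero_of_sup_eq_top (hB : B.SeparatingLeft) (hUU' : U ⊔ U' = ⊤)
    {v : V} (hU : ∀ u ∈ U, B v u = 0) (hU' : ∀ u ∈ U', B v u = 0) : v = 0 := by
  refine hB v fun w => ?_
  obtain ⟨u, hu, u', hu', rfl⟩ := Submodule.mem_sup.mp (hUU' ▸ Submodule.mem_top : w ∈ U ⊔ U')
  rw [map_add, hU u hu, hU' u' hu', add_zero]

theorem SeparatingRight.injective_flip_compl₁₂_subtype (hB : B.SeparatingRight)
    (hUU' : U ⊔ U' = ⊤) (hU' : ∀ x ∈ U', ∀ y ∈ U', B x y = 0) :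
    Function.Injective (B.compl₁₂ U.subtype U'.subtype).flip := by
  refine (injective_iff_map_eq_zero _).mpr fun w' hw' => Subtype.ext ?_
  refine (flip_separatingLeft.mpr hB).eq_zero_of_sup_eq_top hUU' (fun u hu => ?_)
    (fun u hu => hU' u hu w' w'.2)
  exact LinearMap.congr_fun hw' ⟨u, hu⟩

theorem SeparatingLeft.isCompl_of_sup_eq_top (hB : B.SeparatingLeft) (hUU' : U ⊔ U' = ⊤)
    (hU : ∀ x ∈ U, ∀ y ∈ U, B x y = 0) (hU' : ∀ x ∈ U', ∀ y ∈ U', B x y = 0) :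
    IsCompl U U' := by
  refine ⟨Submodule.disjoint_def.mpr fun v hv hv' => ?_, codisjoint_iff.mpr hUU'⟩
  exact hB.eq_zero_of_sup_eq_top hUU' (hU v hv) (hU' v hv')

theorem Nondegenerate.exists_linearEquiv_dual [FiniteDimensional K V] (hB : B.Nondegenerate)
    (hUU' : U ⊔ U' = ⊤) (hU : ∀ x ∈ U, ∀ y ∈ U, B x y = 0)
    (hU' : ∀ x ∈ U', ∀ y ∈ U', B x y = 0) :
    ∃ e : U' ≃ₗ[K] Dual K U, ∀ (w' : U') (w : U), e w' w = B w w' := by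
  have hinj := hB.2.injective_flip_compl₁₂_subtype hUU' hU'
  have hinj' := (flip_separatingRight.mpr hB.1).injective_flip_compl₁₂_subtype
    (sup_comm U U' ▸ hUU') fun x hx y hy => hU y hy x hx
  have hle := LinearMap.finrank_le_finrank_of_injective hinj
  have hle' := LinearMap.finrank_le_finrank_of_injective hinj'
  rw [Subspace.dual_finrank_eq] at hle hle'
  exact ⟨LinearMap.linearEquivOfInjective _ hinj (by rw [Subspace.dual_finrank_eq]; omega),
    fun _ _ => rfl⟩

theorem IsAlt.isotropic_sup_span_singleton (hB : B.IsAlt) (hL : ∀ x ∈ L, ∀ y ∈ L, B x y = 0)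
    {v : V} (hv : ∀ x ∈ L, B v x = 0) : ∀ x ∈ L ⊔ K ∙ v, ∀ y ∈ L ⊔ K ∙ v, B x y = 0 := by
  intro x hx y hy
  obtain ⟨l, hl, _, hz, rfl⟩ := Submodule.mem_sup.mp hx
  obtain ⟨a, rfl⟩ := Submodule.mem_span_singleton.mp hz
  obtain ⟨l', hl', _, hz', rfl⟩ := Submodule.mem_sup.mp hy
  obtain ⟨b, rfl⟩ := Submodule.mem_span_singleton.mp hz'
  simp [hL l hl l' hl', hv l' hl', hB.eq_iff.mp (hv l hl), hB v]

/-- Each `u ∈ U` is `u₀ - (B w u / B v w) • v + (B v u / B v w) • w` with `u₀` in the first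
summand. -/
theorem IsAlt.inf_ker_sup_span_pair (hB : B.IsAlt) {v w : V} (hv : v ∈ U) (hw : w ∈ U)
    (hvw : B v w ≠ 0) : U ⊓ (ker (B v) ⊓ ker (B w)) ⊔ (K ∙ v ⊔ K ∙ w) = U := by
  refine le_antisymm (sup_le inf_le_left (sup_le ?_ ?_)) fun u hu => ?_
  · exact (Submodule.span_singleton_le_iff_mem v U).mpr hv
  · exact (Submodule.span_singleton_le_iff_mem w U).mpr hw
  set a := B w u / B v w
  set b := B v u / B v w
  have hwv : B w v = -B v w := (hB.neg v w).symm
  refine Submodule.mem_sup.mpr ⟨u + a • v - b • w, ⟨?_, ?_, ?_⟩, b • w - a • v,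
    Submodule.sub_mem _ (Submodule.mem_sup_right (Submodule.mem_span_singleton.mpr ⟨_, rfl⟩))
      (Submodule.mem_sup_left (Submodule.mem_span_singleton.mpr ⟨_, rfl⟩)), by abel⟩
  · exact U.sub_mem (U.add_mem hu (U.smul_mem a hv)) (U.smul_mem b hw)
  · change B v (u + a • v - b • w) = 0
    simp only [map_add, map_sub, map_smul, smul_eq_mul, hB v, b]
    field_simp
    ring
  · change B w (u + a • v - b • w) = 0
    simp only [map_add, map_sub, map_smul, smul_eq_mul, hB w, hwv, a]
    field_simp
    ring

theorem IsAlt.exists_isotropic_sup_eq [FiniteDimensional K V] (hB : B.IsAlt)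
    (U : Submodule K V) : ∃ L L' : Submodule K V, (∀ x ∈ L, ∀ y ∈ L, B x y = 0) ∧
      (∀ x ∈ L', ∀ y ∈ L', B x y = 0) ∧ L ⊔ L' = U := by
  induction hn : finrank K U using Nat.strong_induction_on generalizing U with
  | _ n ih =>
  by_cases hU : ∀ x ∈ U, ∀ y ∈ U, B x y = 0
  · exact ⟨U, ⊥, hU, by simp, sup_bot_eq U⟩
  push Not at hU
  obtain ⟨v, hv, w, hw, hvw⟩ := hU
  set U₀ := U ⊓ (ker (B v) ⊓ ker (B w))
  have hv₀ : v ∉ U₀ := fun h => hvw (hB.eq_iff.mp h.2.2)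
  have hU₀ : U₀ < U := inf_le_left.lt_of_ne fun h : U₀ = U => hv₀ (h ▸ hv)
  have hlt : finrank K U₀ < n := hn ▸ Submodule.finrank_lt_finrank_of_lt hU₀
  obtain ⟨L, L', hL, hL', hLL'⟩ := ih _ hlt U₀ rfl
  have hL₀ : ∀ x ∈ L ⊔ L', B v x = 0 ∧ B w x = 0 := fun x hx =>
    have hx₀ : x ∈ U₀ := hLL' ▸ hx
    ⟨hx₀.2.1, hx₀.2.2⟩
  refine ⟨L ⊔ K ∙ v, L' ⊔ K ∙ w,
    hB.isotropic_sup_span_singleton hL fun x hx => (hL₀ x (Submodule.mem_sup_left hx)).1,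
    hB.isotropic_sup_span_singleton hL' fun x hx => (hL₀ x (Submodule.mem_sup_right hx)).2, ?_⟩
  rw [sup_sup_sup_comm, hLL', hB.inf_ker_sup_span_pair hv hw hvw]

end LinearMap

theorem exists_set_inv_mem_iff_notMem (G : Type*) [InvolutiveInv G] :
    ∃ S : Set G, ∀ χ : G, χ⁻¹ ≠ χ → (χ⁻¹ ∈ S ↔ χ ∉ S) := by
  let _ : LinearOrder G := IsWellOrder.linearOrder WellOrderingRel
  refine ⟨{χ | χ < χ⁻¹}, fun χ hχ => ?_⟩
  simp only [Set.mem_ofPred_eq, inv_inv, not_lt]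
  exact ⟨le_of_lt, fun h => h.lt_of_ne hχ⟩

section Polarization

variable {G K V : Type*} [InvolutiveInv G] [Field K] [AddCommGroup V] [Module K V]
  {B : V →ₗ[K] V →ₗ[K] K} {S : Set G} {L L' U : G → Submodule K V}

open Classical in
noncomputable def polarizationHalf (S : Set G) (L U : G → Submodule K V) (χ : G) :
    Submodule K V :=
  if χ⁻¹ = χ then L χ else if χ ∈ S then U χ else ⊥

theorem polarizationHalf_isOrtho_inv (hS : ∀ χ : G, χ⁻¹ ≠ χ → χ ∈ S → χ⁻¹ ∉ S)
    (hL : ∀ χ : G, χ⁻¹ = χ → ∀ x ∈ L χ, ∀ y ∈ L χ, B x y = 0) (χ : G) :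
    ∀ x ∈ polarizationHalf S L U χ, ∀ y ∈ polarizationHalf S L U χ⁻¹, B x y = 0 := by
  intro x hx y hy
  by_cases hχ : χ⁻¹ = χ
  · rw [hχ] at hy
    simp only [polarizationHalf, if_pos hχ] at hx hy
    exact hL χ hχ x hx y hy
  by_cases hS' : χ ∈ S
  · have hχ' : χ⁻¹⁻¹ ≠ χ⁻¹ := by rwa [inv_inv, ne_comm]
    simp only [polarizationHalf, if_neg hχ', if_neg (hS χ hχ hS'), Submodule.mem_bot] at hy
    rw [hy, map_zero]
  · simp only [polarizationHalf, if_neg hχ, if_neg hS', Submodule.mem_bot] at hx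
    rw [hx, map_zero, LinearMap.zero_apply]

theorem polarizationHalf_sup_compl (hLL' : ∀ χ, L χ ⊔ L' χ = U χ) (χ : G) :
    polarizationHalf S L U χ ⊔ polarizationHalf Sᶜ L' U χ = U χ := by
  unfold polarizationHalf
  split_ifs <;> simp_all

theorem LinearMap.IsAlt.exists_polarization_family [FiniteDimensional K V] (hB : B.IsAlt)
    (U : G → Submodule K V) :
    ∃ f g : G → Submodule K V, ∀ χ, f χ ⊔ g χ = U χ ∧
      (∀ x ∈ f χ, ∀ y ∈ f χ⁻¹, B x y = 0) ∧ (∀ x ∈ g χ, ∀ y ∈ g χ⁻¹, B x y = 0) := by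
  obtain ⟨S, hS⟩ := exists_set_inv_mem_iff_notMem G
  choose L L' hL hL' hLL' using fun χ => hB.exists_isotropic_sup_eq (U χ)
  refine ⟨polarizationHalf S L U, polarizationHalf Sᶜ L' U, fun χ =>
    ⟨polarizationHalf_sup_compl hLL' χ,
      polarizationHalf_isOrtho_inv (fun χ hχ hS' h => (hS χ hχ).mp h hS') (fun χ _ => hL χ) χ,
      polarizationHalf_isOrtho_inv (fun χ hχ hS' => Set.notMem_compl_iff.mpr ((hS χ hχ).mpr hS'))
        (fun χ _ => hL' χ) χ⟩⟩

end Polarization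

theorem LinearMap.apply_apply_eq_zero_of_mem_iSup {K V ι κ : Type*} [Field K] [AddCommGroup V]
    [Module K V] {B : V →ₗ[K] V →ₗ[K] K} {f : ι → Submodule K V} {g : κ → Submodule K V}
    (h : ∀ i j, ∀ x ∈ f i, ∀ y ∈ g j, B x y = 0) :
    ∀ x ∈ ⨆ i, f i, ∀ y ∈ ⨆ j, g j, B x y = 0 := by
  have hg : ∀ i, ∀ x ∈ f i, ⨆ j, g j ≤ ker (B x) := fun i x hx =>
    iSup_le fun j y hy => h i j x hx y hy
  intro x hx y hy
  exact (iSup_le fun i x' hx' => hg i x' hx' hy : ⨆ i, f i ≤ ker (B.flip y)) hx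

section WeightSpace

variable {T V : Type*} [CommGroup T] [AddCommGroup V] [Module ℂ V] {ρ : T →* (V ≃ₗ[ℂ] V)}
  {B : V →ₗ[ℂ] V →ₗ[ℂ] ℂ}

theorem weightSpace_isOrtho (hiso : ∀ (t : T) (v w : V), B (ρ t v) (ρ t w) = B v w)
    {χ ψ : T →* ℂˣ} (hχψ : χ * ψ ≠ 1) :
    ∀ x ∈ weightSpace ρ χ, ∀ y ∈ weightSpace ρ ψ, B x y = 0 := by
  intro x hx y hy
  obtain ⟨t, ht⟩ : ∃ t, χ t * ψ t ≠ 1 := by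
    by_contra! h
    exact hχψ (MonoidHom.ext h)
  have hscale : ((χ t : ℂ) * ψ t) * B x y = B x y := by
    conv_rhs => rw [← hiso t x y, hx t, hy t]
    simp only [map_smul, LinearMap.smul_apply, smul_eq_mul]
    ring
  exact (mul_left_eq_self₀.mp hscale).resolve_left (by rwa [← Units.val_mul, Units.val_eq_one])

theorem isotropic_iSup_of_le_weightSpace
    (hiso : ∀ (t : T) (v w : V), B (ρ t v) (ρ t w) = B v w) {f : (T →* ℂˣ) → Submodule ℂ V}
    (hf : ∀ χ, f χ ≤ weightSpace ρ χ) (hf_inv : ∀ χ, ∀ x ∈ f χ, ∀ y ∈ f χ⁻¹, B x y = 0) :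
    ∀ x ∈ ⨆ χ, f χ, ∀ y ∈ ⨆ χ, f χ, B x y = 0 := by
  refine LinearMap.apply_apply_eq_zero_of_mem_iSup fun χ ψ x hx y hy => ?_
  by_cases h : χ * ψ = 1
  · obtain rfl := eq_inv_of_mul_eq_one_right (a := χ) (b := ψ) h
    exact hf_inv χ x hx y hy
  · exact weightSpace_isOrtho hiso h x (hf χ hx) y (hf ψ hy)

theorem map_mem_iSup_of_le_weightSpace {f : (T →* ℂˣ) → Submodule ℂ V}
    (hf : ∀ χ, f χ ≤ weightSpace ρ χ) (t : T) : ∀ v ∈ ⨆ χ, f χ, ρ t v ∈ ⨆ χ, f χ := by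
  refine (iSup_le fun χ x hx => ?_ : ⨆ χ, f χ ≤ (⨆ χ, f χ).comap (ρ t).toLinearMap)
  rw [Submodule.mem_comap, LinearEquiv.coe_coe, show ρ t x = (χ t : ℂ) • x from hf χ hx t]
  exact Submodule.mem_iSup_of_mem χ (Submodule.smul_mem _ _ hx)

end WeightSpace

/-- Let `T` be an abelian group, `V` a finite-dimensional complex vector
space with a nondegenerate alternating bilinear form `B`, and `ρ : T → GL(V)` a
representation such that every `ρ t` is an isometry of `B` and such that `V` is the sum
of its weight spaces.  Then there exist `ρ`-invariant subspaces `W` and `W'` of `V` with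
`V = W ⊕ W'`, with `B` vanishing identically on `W × W` and on `W' × W'`, and such that
the map sending `w' ∈ W'` to the linear functional `B (·, w')` on `W` is a `T`-equivariant
isomorphism from `W'` onto the dual representation of `W`. -/
theorem symplectic_torus_rep_is_distinguished_polarization
    (T : Type*) [CommGroup T]
    (V : Type*) [AddCommGroup V] [Module ℂ V] [FiniteDimensional ℂ V]
    (B : V →ₗ[ℂ] V →ₗ[ℂ] ℂ)
    (halt : ∀ v : V, B v v = 0)
    (hB : ∀ v : V, (∀ w : V, B v w = 0) → v = 0)
    (ρ : T →* (V ≃ₗ[ℂ] V))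
    (hiso : ∀ (t : T) (v w : V), B (ρ t v) (ρ t w) = B v w)
    (hwt : (⨆ χ : T →* ℂˣ, weightSpace ρ χ) = ⊤) :
    ∃ (W W' : Submodule ℂ V)
      (hW : ∀ t : T, ∀ v ∈ W, ρ t v ∈ W)
      (hW' : ∀ t : T, ∀ v ∈ W', ρ t v ∈ W'),
      IsCompl W W' ∧
      (∀ x ∈ W, ∀ y ∈ W, B x y = 0) ∧
      (∀ x ∈ W', ∀ y ∈ W', B x y = 0) ∧
      ∃ e : W' ≃ₗ[ℂ] Module.Dual ℂ W,
        (∀ (w' : W') (w : W), e w' w = B w w') ∧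
        (∀ (t : T) (w' : W') (w : W),
          e ⟨ρ t ↑w', hW' t ↑w' w'.2⟩ w = e w' ⟨ρ t⁻¹ ↑w, hW t⁻¹ ↑w w.2⟩) := by
  obtain ⟨f, g, hfg⟩ := LinearMap.IsAlt.exists_polarization_family halt (weightSpace ρ)
  have hf : ∀ χ, f χ ≤ weightSpace ρ χ := fun χ => (hfg χ).1 ▸ le_sup_left
  have hg : ∀ χ, g χ ≤ weightSpace ρ χ := fun χ => (hfg χ).1 ▸ le_sup_right
  have hsup : (⨆ χ, f χ) ⊔ ⨆ χ, g χ = ⊤ := by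
    rw [← iSup_sup_eq, ← hwt]
    exact iSup_congr fun χ => (hfg χ).1
  have hW := isotropic_iSup_of_le_weightSpace hiso hf fun χ => (hfg χ).2.1
  have hW' := isotropic_iSup_of_le_weightSpace hiso hg fun χ => (hfg χ).2.2
  have hnd : B.Nondegenerate :=
    (LinearMap.IsAlt.isRefl halt).nondegenerate_iff_separatingLeft.mpr hB
  obtain ⟨e, he⟩ := hnd.exists_linearEquiv_dual hsup hW hW'
  refine ⟨_, _, map_mem_iSup_of_le_weightSpace hf, map_mem_iSup_of_le_weightSpace hg,
    LinearMap.SeparatingLeft.isCompl_of_sup_eq_top hB hsup hW hW', hW, hW', e, he,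
    fun t w' w => ?_⟩
  rw [he, he, ← hiso t (ρ t⁻¹ w), map_inv, LinearEquiv.coe_inv, LinearEquiv.apply_symm_apply]
end

section
/- Let T be an abelian group and let ρ and ρ' be finite-dimensional complex representations of T, each of which is isomorphic to a direct sum of one-dimensional representations. If ρ ⊕ ρ^∨ and ρ' ⊕ ρ'^∨ are isomorphic as representations of T, then there exists a group homomorphism ψ : T → ℂ^× such that det∘ρ' = (det∘ρ)·ψ² as characters of T. In particular, for any group homomorphism η : T → ℂ^×, there exists χ : T → ℂ^× with det∘ρ = χ²·η if and only if there exists χ' : T → ℂ^× with det∘ρ' = χ'²·η. -/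
/-- The weight space of a representation `ρ` of an abelian group `T` for the
character `χ : T →* ℂˣ`. -/
def wtSpace {T V : Type*} [CommGroup T] [AddCommGroup V] [Module ℂ V]
    (ρ : Representation ℂ T V) (χ : T →* ℂˣ) : Submodule ℂ V where
  carrier := {v | ∀ t : T, ρ t v = (χ t : ℂ) • v}
  add_mem' := by
    intro a b ha hb t
    simp [map_add, ha t, hb t, smul_add]
  zero_mem' := by intro t; simp
  smul_mem' := by
    intro c v hv t
    rw [map_smul, hv t, smul_comm]

/-!
In a basis of weight vectors, `det ∘ ρ` is the product of the multiset `M` of weights of `ρ`,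
and the weights of `ρ ⊕ ρ^∨` form `M + M⁻¹`. So the hypothesis gives `M + M⁻¹ = M' + M'⁻¹`.
Comparing multiplicities, with `A = M - M'` this forces `M' - M = A⁻¹`, hence
`M' + A = M ∪ M' = M + A⁻¹` and `∏ M' = ∏ M · ((∏ A)⁻¹)²`.
-/

theorem Multiset.exists_prod_eq_mul_sq_of_add_map_inv_eq {G : Type*} [CommGroup G]
    [DecidableEq G] {M M' : Multiset G}
    (h : M + M.map (·⁻¹) = M' + M'.map (·⁻¹)) : ∃ g, M'.prod = M.prod * g ^ 2 := by
  have count_map_inv (N : Multiset G) (g : G) : (N.map (·⁻¹)).count g = N.count g⁻¹ := by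
    simpa using count_map_eq_count' _ N inv_injective g⁻¹
  have hsub : M' - M = (M - M').map (·⁻¹) := by
    ext g
    have hg := congrArg (count g) h
    simp only [count_add, count_map_inv, count_sub] at hg ⊢
    omega
  have hunion : M' + (M - M') = M + (M - M').map (·⁻¹) := by
    rw [← hsub, add_comm M', add_comm M, ← union_def, ← union_def, union_comm]
  refine ⟨(M - M').prod⁻¹, ?_⟩
  have hprod := congrArg prod hunion
  rw [prod_add, prod_add, prod_map_inv, map_id'] at hprod
  rw [eq_mul_inv_iff_mul_eq.mpr hprod]
  group

section WeightBasis

variable {T V W : Type*} [CommGroup T] [AddCommGroup V] [Module ℂ V]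
  [AddCommGroup W] [Module ℂ W] {ι κ : Type*}

def IsWeightBasis (ρ : Representation ℂ T V) (b : Module.Basis ι ℂ V) (w : ι → T →* ℂˣ) :
    Prop :=
  ∀ i t, ρ t (b i) = (w i t : ℂ) • b i

lemma mem_wtSpace {ρ : Representation ℂ T V} {χ : T →* ℂˣ} {v : V} :
    v ∈ wtSpace ρ χ ↔ ∀ t, ρ t v = (χ t : ℂ) • v :=
  Iff.rfl

namespace IsWeightBasis

variable {ρ : Representation ℂ T V} {b : Module.Basis ι ℂ V} {w : ι → T →* ℂˣ}

lemma repr_apply_eq_mul (hb : IsWeightBasis ρ b w) (t : T) (v : V) (i : ι) :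
    b.repr (ρ t v) i = w i t * b.repr v i := by
  refine LinearMap.congr_fun
    (b.ext (f₁ := b.coord i ∘ₗ ρ t) (f₂ := (w i t : ℂ) • b.coord i) fun j => ?_) v
  by_cases hij : i = j
  · subst hij; simp [hb i t]
  · simp [hb j t, Ne.symm hij]

lemma mem_wtSpace_iff (hb : IsWeightBasis ρ b w) {χ : T →* ℂˣ} {v : V} :
    v ∈ wtSpace ρ χ ↔ ∀ i, b.repr v i ≠ 0 → w i = χ := by
  have hcoord : v ∈ wtSpace ρ χ ↔ ∀ t i, (w i t : ℂ) * b.repr v i = χ t * b.repr v i := by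
    simp only [mem_wtSpace, b.ext_elem_iff, hb.repr_apply_eq_mul, map_smul, Finsupp.smul_apply,
      smul_eq_mul]
  rw [hcoord]
  constructor
  · intro h i hi
    exact MonoidHom.ext fun t => Units.ext (mul_right_cancel₀ hi (h t i))
  · intro h t i
    by_cases hi : b.repr v i = 0
    · simp [hi]
    · rw [h i hi]

lemma finrank_wtSpace [Fintype ι] [DecidableEq (T →* ℂˣ)] (hb : IsWeightBasis ρ b w)
    (χ : T →* ℂˣ) :
    Module.finrank ℂ (wtSpace ρ χ) = (Finset.univ.val.map w).count χ := by
  have : wtSpace ρ χ = (Finsupp.supported ℂ ℂ {i | w i = χ}).comap b.repr.toLinearMap := by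
    ext v
    simp only [Submodule.mem_comap, Finsupp.mem_supported', hb.mem_wtSpace_iff]
    exact forall_congr' fun i => not_imp_comm
  rw [this, Submodule.comap_equiv_eq_map_symm, LinearEquiv.finrank_map_eq,
    (Finsupp.supportedEquivFinsupp _).finrank_eq, Module.finrank_finsupp_self,
    Multiset.count_map, Fintype.card_ofFinset]
  simp only [eq_comm]
  rfl

lemma det_eq [Fintype ι] [DecidableEq ι] (hb : IsWeightBasis ρ b w) (t : T) :
    LinearMap.det (ρ t) = ∏ i, (w i t : ℂ) := by
  rw [← LinearMap.det_toMatrix b, ← Matrix.det_diagonal]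
  congr 1
  ext i j
  simp [LinearMap.toMatrix_apply, hb.repr_apply_eq_mul, Matrix.diagonal_apply,
    Finsupp.single_apply, eq_comm]

lemma dual [Finite ι] [DecidableEq ι] (hb : IsWeightBasis ρ b w) :
    IsWeightBasis ρ.dual b.dualBasis (fun i => (w i)⁻¹) := by
  intro i t
  refine b.ext fun j => ?_
  by_cases hij : i = j
  · subst hij; simp [Representation.dual_apply, Module.Dual.transpose_apply, hb i t⁻¹]
  · simp [Representation.dual_apply, Module.Dual.transpose_apply, hb j t⁻¹, hij]

lemma prod {σ : Representation ℂ T W} {c : Module.Basis κ ℂ W} {w' : κ → T →* ℂˣ}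
    (hb : IsWeightBasis ρ b w) (hc : IsWeightBasis σ c w') :
    IsWeightBasis (ρ.prod σ) (b.prod c) (Sum.elim w w') := by
  rintro (i | i) t
  · ext <;> simp [hb i t]
  · ext <;> simp [hc i t]

end IsWeightBasis

lemma exists_isWeightBasis [FiniteDimensional ℂ V] {ρ : Representation ℂ T V}
    (hρ : (⨆ χ : T →* ℂˣ, wtSpace ρ χ) = ⊤) :
    ∃ (n : ℕ) (b : Module.Basis (Fin n) ℂ V) (w : Fin n → T →* ℂˣ), IsWeightBasis ρ b w := by
  obtain ⟨s, hs, hspan, hli⟩ :=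
    exists_linearIndependent ℂ (⋃ χ : T →* ℂˣ, (wtSpace ρ χ : Set V))
  rw [← Submodule.iSup_eq_span, hρ] at hspan
  have : Fintype s := hli.setFinite.fintype
  have hwt (v : s) : ∃ χ : T →* ℂˣ, (v : V) ∈ wtSpace ρ χ := Set.mem_iUnion.mp (hs v.2)
  choose w hw using hwt
  let e := Fintype.equivFin s
  refine ⟨_, (Module.Basis.mk hli (by rw [Subtype.range_coe, hspan])).reindex e, w ∘ e.symm,
    fun i t => ?_⟩
  simpa using hw (e.symm i) t

lemma finrank_wtSpace_eq_of_linearEquiv {ρ : Representation ℂ T V} {σ : Representation ℂ T W}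
    (e : V ≃ₗ[ℂ] W) (he : ∀ t v, e (ρ t v) = σ t (e v)) (χ : T →* ℂˣ) :
    Module.finrank ℂ (wtSpace ρ χ) = Module.finrank ℂ (wtSpace σ χ) := by
  suffices (wtSpace ρ χ).map (e : V →ₗ[ℂ] W) = wtSpace σ χ by
    rw [← this, LinearEquiv.finrank_map_eq]
  ext v
  rw [Submodule.map_equiv_eq_comap_symm, Submodule.mem_comap, mem_wtSpace, mem_wtSpace]
  refine forall_congr' fun t => ?_
  rw [← e.injective.eq_iff, he, LinearEquiv.coe_coe, e.apply_symm_apply, map_smul,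
    e.apply_symm_apply]

lemma exists_eq_sq_mul_of_eq_mul_sq {f f' : T → ℂ} {ψ η : T →* ℂˣ}
    (h : ∀ t, f' t = f t * (ψ t : ℂ) ^ 2) (hf : ∃ χ : T →* ℂˣ, ∀ t, f t = (χ t : ℂ) ^ 2 * η t) :
    ∃ χ' : T →* ℂˣ, ∀ t, f' t = (χ' t : ℂ) ^ 2 * η t := by
  obtain ⟨χ, hχ⟩ := hf
  exact ⟨χ * ψ, fun t => by rw [h, hχ, MonoidHom.mul_apply, Units.val_mul]; ring⟩

end WeightBasis

/-- Let `T` be an abelian group and `ρ, ρ'` finite-dimensional complex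
representations of `T`, each a direct sum of one-dimensional representations (i.e. each
is the sum of its weight spaces).  If `ρ ⊕ ρ^∨ ≅ ρ' ⊕ ρ'^∨` as representations of `T`,
then there is a homomorphism `ψ : T → ℂˣ` with `det ∘ ρ' = (det ∘ ρ) · ψ²`.  In
particular, for any `η : T → ℂˣ` there exists `χ` with `det ∘ ρ = χ² · η` iff there
exists `χ'` with `det ∘ ρ' = χ'² · η`. -/
theorem det_square_class_independent_of_polarization
    (T : Type*) [CommGroup T]
    (V V' : Type*) [AddCommGroup V] [Module ℂ V] [FiniteDimensional ℂ V]
    [AddCommGroup V'] [Module ℂ V'] [FiniteDimensional ℂ V']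
    (ρ : Representation ℂ T V) (ρ' : Representation ℂ T V')
    (hρ : (⨆ χ : T →* ℂˣ, wtSpace ρ χ) = ⊤)
    (hρ' : (⨆ χ : T →* ℂˣ, wtSpace ρ' χ) = ⊤)
    (e : (V × Module.Dual ℂ V) ≃ₗ[ℂ] (V' × Module.Dual ℂ V'))
    (he : ∀ (t : T) (p : V × Module.Dual ℂ V),
      e (ρ t p.1, ρ.dual t p.2) = (ρ' t (e p).1, ρ'.dual t (e p).2)) :
    (∃ ψ : T →* ℂˣ, ∀ t : T,
      LinearMap.det (ρ' t) = LinearMap.det (ρ t) * (ψ t : ℂ) ^ 2) ∧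
    (∀ η : T →* ℂˣ,
      (∃ χ : T →* ℂˣ, ∀ t : T, LinearMap.det (ρ t) = (χ t : ℂ) ^ 2 * (η t : ℂ)) ↔
      (∃ χ' : T →* ℂˣ, ∀ t : T, LinearMap.det (ρ' t) = (χ' t : ℂ) ^ 2 * (η t : ℂ))) := by
  classical
  obtain ⟨n, b, w, hb⟩ := exists_isWeightBasis hρ
  obtain ⟨n', b', w', hb'⟩ := exists_isWeightBasis hρ'
  have hweights : Finset.univ.val.map w + (Finset.univ.val.map w).map (·⁻¹) =
      Finset.univ.val.map w' + (Finset.univ.val.map w').map (·⁻¹) := by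
    ext χ
    have := finrank_wtSpace_eq_of_linearEquiv (ρ := ρ.prod ρ.dual) (σ := ρ'.prod ρ'.dual)
      e he χ
    rw [(hb.prod hb.dual).finrank_wtSpace, (hb'.prod hb'.dual).finrank_wtSpace] at this
    simpa only [← Finset.univ_disjSum_univ, Finset.val_disjSum, Multiset.map_disjSum,
      Sum.elim_inl, Sum.elim_inr, Multiset.map_map, Function.comp_def] using this
  obtain ⟨ψ, hψ⟩ := Multiset.exists_prod_eq_mul_sq_of_add_map_inv_eq (G := T →* ℂˣ) hweights
  have hdet (t : T) : LinearMap.det (ρ' t) = LinearMap.det (ρ t) * (ψ t : ℂ) ^ 2 := by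
    rw [← Finset.prod_eq_multiset_prod, ← Finset.prod_eq_multiset_prod] at hψ
    have := congrArg (fun χ : T →* ℂˣ => (χ t : ℂ)) hψ
    simpa only [hb.det_eq, hb'.det_eq, MonoidHom.mul_apply, MonoidHom.finsetProd_apply,
      Units.val_mul, Units.coe_prod, MonoidHom.pow_apply, Units.val_pow_eq_pow_val] using this
  have hdet_inv (t : T) : LinearMap.det (ρ t) = LinearMap.det (ρ' t) * (ψ⁻¹ t : ℂ) ^ 2 := by
    rw [hdet, MonoidHom.inv_apply, Units.val_inv_eq_inv_val, mul_assoc, ← mul_pow,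
      mul_inv_cancel₀ (ψ t).ne_zero, one_pow, mul_one]
  exact ⟨⟨ψ, hdet⟩, fun η =>
    ⟨exists_eq_sq_mul_of_eq_mul_sq hdet, exists_eq_sq_mul_of_eq_mul_sq hdet_inv⟩⟩
end

section
/- Let V and W be finite-dimensional complex vector spaces equipped with nondegenerate symmetric bilinear forms, and let g and h be diagonalizable linear automorphisms of V and W that are isometries of the respective forms. Then dim E_{−1}(g ⊗ h) ≡ dim E_1(g)·dim E_{−1}(h) + dim E_{−1}(g)·dim E_1(h) (mod 2). -/
/-!
An isometry `g` of a bilinear form `B` makes `E_a(g)` and `E_b(g)` orthogonal unless `a * b = 1`.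
If moreover `g` is diagonalizable and `B` nondegenerate, `B` therefore pairs `E_c(g)`
nondegenerately with `E_{c⁻¹}(g)`, so the two eigenspaces have the same dimension.

In eigenbases of `g` and `h`, `dim E_t(g ⊗ h) = ∑_{a b = t} dim E_a(g) * dim E_b(h)`. For `t = -1`
the summand is invariant under the involution `(a, b) ↦ (a⁻¹, b⁻¹)` of `{a b = -1}`, so modulo `2`
only its fixed points `(1, -1)` and `(-1, 1)` contribute.
-/

open Module Module.End Function Set Finset

universe u

variable {K : Type u} [Field K]

section Eigenbasis

variable {U : Type*} [AddCommGroup U] [Module K U]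

theorem Module.End.exists_basis_of_iSup_eigenspace_eq_top [FiniteDimensional K U] {f : End K U}
    (hf : ⨆ μ, f.eigenspace μ = ⊤) :
    ∃ (ι : Type u) (_ : Fintype ι) (b : Basis ι K U) (d : ι → K), ∀ i, f (b i) = d i • b i := by
  classical
  have hint := DirectSum.isInternal_submodule_of_iSupIndep_of_iSup_eq_top
    f.eigenspaces_iSupIndep hf
  let b := hint.collectedBasis fun μ ↦ finBasis K (f.eigenspace μ)
  exact ⟨_, FiniteDimensional.fintypeBasisIndex b, b, Sigma.fst,
    fun i ↦ mem_eigenspace_iff.mp (hint.collectedBasis_mem _ i)⟩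

theorem Module.Basis.repr_apply_eq_mul_of_apply_eq_smul {ι : Type*} (b : Basis ι K U)
    {f : End K U} {d : ι → K} (hf : ∀ i, f (b i) = d i • b i) (x : U) (i : ι) :
    b.repr (f x) i = d i * b.repr x i := by
  have : (b.coord i).comp f = d i • b.coord i := b.ext fun j ↦ by
    by_cases hij : j = i <;> simp [hf, hij]
  exact LinearMap.congr_fun this x

theorem Module.End.finrank_eigenspace_eq_card {ι : Type*} [Fintype ι] [DecidableEq K]
    (b : Basis ι K U) {f : End K U} {d : ι → K} (hf : ∀ i, f (b i) = d i • b i) (ν : K) :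
    finrank K (f.eigenspace ν) = #{i | d i = ν} := by
  have hspan : f.eigenspace ν = Submodule.span K (b '' {i | d i = ν}) := by
    ext x
    rw [mem_eigenspace_iff, b.mem_span_image, b.ext_elem_iff]
    simp only [b.repr_apply_eq_mul_of_apply_eq_smul hf, map_smul, Finsupp.smul_apply, smul_eq_mul]
    refine ⟨fun hx i hi ↦ mul_right_cancel₀ (Finsupp.mem_support_iff.mp hi) (hx i), fun hx i ↦ ?_⟩
    by_cases hi : b.repr x i = 0
    · simp [hi]
    · rw [hx (Finsupp.mem_support_iff.mpr hi)]
  rw [hspan, image_eq_range]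
  exact (finrank_span_eq_card (b.linearIndependent.comp _ Subtype.val_injective)).trans
    (Fintype.card_subtype _)

theorem Module.End.finite_support_finrank_eigenspace [FiniteDimensional K U] (f : End K U) :
    (Function.support fun μ ↦ finrank K (f.eigenspace μ)).Finite :=
  f.finite_hasEigenvalue.subset fun μ hμ ↦ hasEigenvalue_iff.mpr fun h ↦ hμ (by simp [h])

end Eigenbasis

theorem Finset.card_filter_eq_finsum_card_fiber {ι β : Type*} [Fintype ι] [DecidableEq β]
    (D : ι → β) (P : β → Prop) [DecidablePred P] :
    #{i | P (D i)} = ∑ᶠ p ∈ {p | P p}, #{i | D i = p} := by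
  rw [finsum_mem_eq_sum_of_subset (t := image D {i | P (D i)}) _ ?support ?subset,
    card_eq_sum_card_image D]
  case support =>
    rintro p ⟨hp, hne⟩
    obtain ⟨i, hi⟩ := card_ne_zero.mp hne
    exact mem_image.mpr ⟨i, by simp_all⟩
  case subset =>
    intro p hp
    obtain ⟨i, hi, rfl⟩ := mem_image.mp hp
    exact (mem_filter.mp hi).2
  refine sum_congr rfl fun p hp ↦ ?_
  obtain ⟨j, hj, rfl⟩ := mem_image.mp hp
  rw [filter_filter]
  exact congrArg card (filter_congr fun i _ ↦ and_iff_right_of_imp fun h ↦ h ▸ (mem_filter.mp hj).2)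

theorem Module.End.finrank_eigenspace_map_eq_finsum {U U' : Type*} [AddCommGroup U] [Module K U]
    [AddCommGroup U'] [Module K U'] [FiniteDimensional K U] [FiniteDimensional K U']
    {f : End K U} {f' : End K U'} (hf : ⨆ μ, f.eigenspace μ = ⊤) (hf' : ⨆ μ, f'.eigenspace μ = ⊤)
    (t : K) :
    finrank K (eigenspace (TensorProduct.map f f') t) =
      ∑ᶠ p ∈ {p : K × K | p.1 * p.2 = t},
        finrank K (f.eigenspace p.1) * finrank K (f'.eigenspace p.2) := by
  classical
  obtain ⟨ι, _, b, d, hb⟩ := exists_basis_of_iSup_eigenspace_eq_top hf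
  obtain ⟨κ, _, b', d', hb'⟩ := exists_basis_of_iSup_eigenspace_eq_top hf'
  let D : ι × κ → K × K := fun q ↦ (d q.1, d' q.2)
  have hD : ∀ q, TensorProduct.map f f' (b.tensorProduct b' q) = ((D q).1 * (D q).2) • b.tensorProduct b' q :=
    fun q ↦ by rw [Basis.tensorProduct_apply', TensorProduct.map_tmul, hb, hb', TensorProduct.smul_tmul_smul]
  have hfiber : ∀ p : K × K,
      finrank K (f.eigenspace p.1) * finrank K (f'.eigenspace p.2) = #{q | D q = p} := by
    intro p
    rw [finrank_eigenspace_eq_card b hb, finrank_eigenspace_eq_card b' hb', ← card_product]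
    congr 1
    ext q
    simp [D, Prod.ext_iff]
  simp_rw [finrank_eigenspace_eq_card (b.tensorProduct b') hD, hfiber]
  exact card_filter_eq_finsum_card_fiber D fun p ↦ p.1 * p.2 = t

section Isometry

variable {U : Type*} [AddCommGroup U] [Module K U] {B : U →ₗ[K] U →ₗ[K] K} {f : End K U}

theorem LinearMap.apply_eq_zero_of_mem_eigenspace_of_mul_ne_one
    (hiso : ∀ v w, B (f v) (f w) = B v w) {a c : K} {v w : U}
    (hv : v ∈ f.eigenspace a) (hw : w ∈ f.eigenspace c) (hac : a * c ≠ 1) : B v w = 0 := by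
  have h : B v w = (a * c) * B v w :=
    calc B v w = B (f v) (f w) := (hiso v w).symm
      _ = (a * c) * B v w := by
        rw [mem_eigenspace_iff.mp hv, mem_eigenspace_iff.mp hw]
        simp only [map_smul, LinearMap.smul_apply, smul_eq_mul]
        ring
  by_contra hne
  exact hac ((mul_eq_right₀ hne).mp h.symm)

theorem LinearMap.finrank_eigenspace_le_finrank_eigenspace_inv [FiniteDimensional K U]
    (hB : B.SeparatingLeft) (hf : ⨆ μ, f.eigenspace μ = ⊤) (hiso : ∀ v w, B (f v) (f w) = B v w)
    (c : K) : finrank K (f.eigenspace c) ≤ finrank K (f.eigenspace c⁻¹) := by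
  set E := f.eigenspace c
  set E' := f.eigenspace c⁻¹
  have hinj : Injective (B.compl₁₂ E.subtype E'.subtype) := by
    rw [← LinearMap.ker_eq_bot, eq_bot_iff]
    intro v hv
    -- `B v` kills `E'` by assumption and every other eigenspace by orthogonality, hence all of `U`.
    have hle : ∀ μ, f.eigenspace μ ≤ LinearMap.ker (B v) := fun μ w hw ↦ by
      by_cases hμ : c * μ = 1
      · rw [eq_inv_of_mul_eq_one_right hμ] at hw
        exact LinearMap.congr_fun (LinearMap.mem_ker.mp hv) ⟨w, hw⟩
      · exact B.apply_eq_zero_of_mem_eigenspace_of_mul_ne_one hiso v.2 hw hμ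
    have htop : ⊤ ≤ LinearMap.ker (B v) := hf ▸ iSup_le hle
    exact (Submodule.mk_eq_zero _ _).mpr (hB v fun w ↦ htop Submodule.mem_top)
  calc finrank K E ≤ finrank K (Dual K E') := LinearMap.finrank_le_finrank_of_injective hinj
    _ = finrank K E' := Subspace.dual_finrank_eq

theorem LinearMap.finrank_eigenspace_inv [FiniteDimensional K U]
    (hB : B.SeparatingLeft) (hf : ⨆ μ, f.eigenspace μ = ⊤) (hiso : ∀ v w, B (f v) (f w) = B v w)
    (c : K) : finrank K (f.eigenspace c⁻¹) = finrank K (f.eigenspace c) := by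
  refine le_antisymm ?_ (finrank_eigenspace_le_finrank_eigenspace_inv hB hf hiso c)
  have := finrank_eigenspace_le_finrank_eigenspace_inv hB hf hiso c⁻¹
  rwa [inv_inv] at this

end Isometry

theorem Finset.sum_modEq_two_sum_filter_fixed {α : Type*} {σ : α → α} (hσ : Involutive σ)
    [DecidablePred fun x ↦ σ x = x] {s : Finset α} (hs : ∀ x ∈ s, σ x ∈ s) {F : α → ℕ}
    (hF : ∀ x, F (σ x) = F x) :
    ∑ x ∈ s, F x ≡ ∑ x ∈ s with σ x = x, F x [MOD 2] := by
  have hfree : ∑ x ∈ s with σ x ≠ x, (F x : ZMod 2) = 0 := by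
    refine sum_involution (fun x _ ↦ σ x) (fun x _ ↦ ?_) (fun x hx _ ↦ (mem_filter.mp hx).2)
      (fun x hx ↦ ?_) (fun x _ ↦ hσ x)
    · rw [hF, ← two_mul, show (2 : ZMod 2) = 0 from rfl, zero_mul]
    · obtain ⟨hxs, hx⟩ := mem_filter.mp hx
      exact mem_filter.mpr ⟨hs x hxs, by rwa [hσ x, ne_comm]⟩
  rw [← ZMod.natCast_eq_natCast_iff, ← sum_filter_add_sum_filter_not s fun x ↦ σ x = x]
  push_cast
  rw [hfree, add_zero]

theorem finsum_mem_modEq_two_finsum_mem_fixedPoints {α : Type*} {σ : α → α} (hσ : Involutive σ)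
    {s : Set α} (hs : MapsTo σ s s) {F : α → ℕ} (hfin : (Function.support F).Finite)
    (hF : ∀ x, F (σ x) = F x) :
    ∑ᶠ x ∈ s, F x ≡ ∑ᶠ x ∈ s ∩ fixedPoints σ, F x [MOD 2] := by
  classical
  have hst : (s ∩ Function.support F).Finite := hfin.subset inter_subset_right
  have ht : ∀ x ∈ hst.toFinset, σ x ∈ hst.toFinset := fun x hx ↦ by
    simp only [Finite.mem_toFinset, mem_inter_iff, mem_support, hF] at hx ⊢
    exact ⟨hs hx.1, hx.2⟩
  rw [finsum_mem_eq_sum F hst, finsum_mem_eq_sum_of_inter_support_eq F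
    (t := {x ∈ hst.toFinset | σ x = x}) (by ext; simp [IsFixedPt]; tauto)]
  exact sum_modEq_two_sum_filter_fixed hσ ht hF

theorem setOf_mul_eq_neg_one_inter_fixedPoints_inv :
    {p : K × K | p.1 * p.2 = -1} ∩ fixedPoints (·⁻¹) = {(1, -1), (-1, 1)} := by
  ext ⟨a, b⟩
  simp only [mem_inter_iff, mem_ofPred_eq, mem_fixedPoints, IsFixedPt, Prod.inv_mk, Prod.mk.injEq,
    mem_insert_iff, mem_singleton_iff]
  constructor
  · rintro ⟨hab, ha, -⟩
    have ha0 : a ≠ 0 := by rintro rfl; simp at hab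
    have haa : a * a = 1 := by nth_rewrite 1 [← ha]; exact inv_mul_cancel₀ ha0
    obtain rfl : b = -a := by linear_combination a * hab - b * haa
    rcases inv_eq_self₀.mp ha with rfl | rfl | rfl
    · simp
    · exact absurd rfl ha0
    · simp
  · rintro (⟨rfl, rfl⟩ | ⟨rfl, rfl⟩) <;> norm_num

theorem dim_minus_one_eigenspace_tensor_mod_two_general
    (V W : Type*) [AddCommGroup V] [Module ℂ V] [FiniteDimensional ℂ V]
    [AddCommGroup W] [Module ℂ W] [FiniteDimensional ℂ W]
    (BV : V →ₗ[ℂ] V →ₗ[ℂ] ℂ) (BW : W →ₗ[ℂ] W →ₗ[ℂ] ℂ)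
    (hVnd : ∀ v : V, (∀ w : V, BV v w = 0) → v = 0)
    (hWnd : ∀ v : W, (∀ w : W, BW v w = 0) → v = 0)
    (g : V ≃ₗ[ℂ] V) (h : W ≃ₗ[ℂ] W)
    (hdg : (⨆ μ : ℂ, Module.End.eigenspace (g : V →ₗ[ℂ] V) μ) = ⊤)
    (hdh : (⨆ μ : ℂ, Module.End.eigenspace (h : W →ₗ[ℂ] W) μ) = ⊤)
    (hgiso : ∀ v w : V, BV (g v) (g w) = BV v w)
    (hhiso : ∀ v w : W, BW (h v) (h w) = BW v w) :
    Module.finrank ℂ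
        (Module.End.eigenspace (TensorProduct.map (g : V →ₗ[ℂ] V) (h : W →ₗ[ℂ] W)) (-1)) ≡
      Module.finrank ℂ (Module.End.eigenspace (g : V →ₗ[ℂ] V) 1) *
          Module.finrank ℂ (Module.End.eigenspace (h : W →ₗ[ℂ] W) (-1)) +
        Module.finrank ℂ (Module.End.eigenspace (g : V →ₗ[ℂ] V) (-1)) *
          Module.finrank ℂ (Module.End.eigenspace (h : W →ₗ[ℂ] W) 1) [MOD 2] := by
  set F : ℂ × ℂ → ℕ := fun p ↦
    finrank ℂ (eigenspace (g : V →ₗ[ℂ] V) p.1) * finrank ℂ (eigenspace (h : W →ₗ[ℂ] W) p.2)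
  have hsupp : (Function.support F).Finite :=
    ((finite_support_finrank_eigenspace (g : V →ₗ[ℂ] V)).prod
      (finite_support_finrank_eigenspace (h : W →ₗ[ℂ] W))).subset fun p hp ↦ mul_ne_zero_iff.mp hp
  have hinv : ∀ p, F p⁻¹ = F p := fun p ↦ by
    simp only [F, Prod.fst_inv, Prod.snd_inv, BV.finrank_eigenspace_inv hVnd hdg hgiso,
      BW.finrank_eigenspace_inv hWnd hdh hhiso]
  have hmaps : MapsTo (·⁻¹) {p : ℂ × ℂ | p.1 * p.2 = -1} {p | p.1 * p.2 = -1} := fun p hp ↦ by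
    simp_all [← mul_inv]
  calc _ = ∑ᶠ p ∈ {p : ℂ × ℂ | p.1 * p.2 = -1}, F p := finrank_eigenspace_map_eq_finsum hdg hdh _
    _ ≡ ∑ᶠ p ∈ {p : ℂ × ℂ | p.1 * p.2 = -1} ∩ fixedPoints (·⁻¹), F p [MOD 2] :=
      finsum_mem_modEq_two_finsum_mem_fixedPoints inv_involutive hmaps hsupp hinv
    _ = _ := by rw [setOf_mul_eq_neg_one_inter_fixedPoints_inv, finsum_mem_pair (by norm_num)]

/-- Let `V` and `W` be finite-dimensional complex vector spaces with
nondegenerate symmetric bilinear forms, and `g, h` diagonalizable isometries of `V, W`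
respectively.  Then `dim E_{-1}(g ⊗ h)` is congruent mod `2` to
`dim E_1(g)·dim E_{-1}(h) + dim E_{-1}(g)·dim E_1(h)`. -/
theorem dim_minus_one_eigenspace_tensor_mod_two
    (V W : Type*) [AddCommGroup V] [Module ℂ V] [FiniteDimensional ℂ V]
    [AddCommGroup W] [Module ℂ W] [FiniteDimensional ℂ W]
    (BV : V →ₗ[ℂ] V →ₗ[ℂ] ℂ) (BW : W →ₗ[ℂ] W →ₗ[ℂ] ℂ)
    (hVsymm : ∀ v w : V, BV v w = BV w v)
    (hVnd : ∀ v : V, (∀ w : V, BV v w = 0) → v = 0)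
    (hWsymm : ∀ v w : W, BW v w = BW w v)
    (hWnd : ∀ v : W, (∀ w : W, BW v w = 0) → v = 0)
    (g : V ≃ₗ[ℂ] V) (h : W ≃ₗ[ℂ] W)
    (hdg : (⨆ μ : ℂ, Module.End.eigenspace (g : V →ₗ[ℂ] V) μ) = ⊤)
    (hdh : (⨆ μ : ℂ, Module.End.eigenspace (h : W →ₗ[ℂ] W) μ) = ⊤)
    (hgiso : ∀ v w : V, BV (g v) (g w) = BV v w)
    (hhiso : ∀ v w : W, BW (h v) (h w) = BW v w) :
    Module.finrank ℂ
        (Module.End.eigenspace (TensorProduct.map (g : V →ₗ[ℂ] V) (h : W →ₗ[ℂ] W)) (-1)) ≡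
      Module.finrank ℂ (Module.End.eigenspace (g : V →ₗ[ℂ] V) 1) *
          Module.finrank ℂ (Module.End.eigenspace (h : W →ₗ[ℂ] W) (-1)) +
        Module.finrank ℂ (Module.End.eigenspace (g : V →ₗ[ℂ] V) (-1)) *
          Module.finrank ℂ (Module.End.eigenspace (h : W →ₗ[ℂ] W) 1) [MOD 2] :=
  dim_minus_one_eigenspace_tensor_mod_two_general V W BV BW hVnd hWnd g h hdg hdh hgiso hhiso
end

section
/- Let V and W be finite-dimensional complex vector spaces equipped with nondegenerate symmetric bilinear forms, and let g and h be diagonalizable linear automorphisms of V and W that are isometries of the respective forms. If det(g) = 1 and det(h) = 1, then dim E_{−1}(g ⊗ h) is even. -/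
/-!
An isometry `g` of a nondegenerate bilinear form `B` is conjugate, through `B : V ≃ V*`, to the
dual map of `g⁻¹`, so `dim E_μ(g) = dim E_{μ⁻¹}(g)`. If `g` is diagonalizable then
`det g = ∏ μ ^ dim E_μ(g)`; pairing each `μ ≠ ±1` with `μ⁻¹` collapses this product to
`(-1) ^ dim E_{-1}(g)`, so `det g = 1` makes `dim E_{-1}(g)` even. Finally `g ⊗ h` is again
diagonalizable, an isometry of the nondegenerate form `B_V ⊗ B_W`, and has determinant
`det g ^ dim W * det h ^ dim V = 1`.
-/

open Module TensorProduct

theorem LinearMap.det_eq_prod_of_apply_basis_eq_smul {R M ι : Type*} [CommRing R]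
    [AddCommGroup M] [Module R M] [Fintype ι] [DecidableEq ι] (b : Basis ι R M)
    (f : M →ₗ[R] M) (c : ι → R) (hc : ∀ i, f (b i) = c i • b i) :
    LinearMap.det f = ∏ i, c i :=
  calc LinearMap.det f = b.det (f ∘ b) := by rw [b.det_comp, b.det_self, mul_one]
    _ = b.det fun i ↦ c i • b i := congrArg b.det (funext hc)
    _ = ∏ i, c i := by rw [AlternatingMap.map_smul_univ, b.det_self, smul_eq_mul, mul_one]

theorem Finset.prod_pow_erase_neg_one_eq_one_of_inv {K : Type*} [Field K] [DecidableEq K]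
    (s : Finset K) (n : K → ℕ) (h0 : (0 : K) ∉ s) (hs : ∀ μ ∈ s, μ⁻¹ ∈ s)
    (hn : ∀ μ ∈ s, n μ⁻¹ = n μ) :
    ∏ μ ∈ s.erase (-1), μ ^ n μ = 1 := by
  have hne : ∀ μ ∈ s.erase (-1), μ ≠ 0 := fun μ hμ h ↦ h0 (h ▸ mem_of_mem_erase hμ)
  refine prod_involution (fun μ _ ↦ μ⁻¹) (fun μ hμ ↦ ?_) (fun μ hμ hμ1 hfix ↦ ?_)
    (fun μ hμ ↦ ?_) fun μ _ ↦ inv_inv μ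
  · rw [hn μ (mem_of_mem_erase hμ), ← mul_pow, mul_inv_cancel₀ (hne μ hμ), one_pow]
  · obtain h | h := mul_self_eq_one_iff.1 (hfix ▸ mul_inv_cancel₀ (hne μ hμ))
    · exact hμ1 (by rw [h, one_pow])
    · exact ne_of_mem_erase hμ h
  · rw [mem_erase] at hμ ⊢
    exact ⟨by rw [Ne, inv_eq_iff_eq_inv, inv_neg, inv_one]; exact hμ.1, hs μ hμ.2⟩

section

variable {K V W : Type*} [Field K] [AddCommGroup V] [Module K V] [AddCommGroup W] [Module K W]

namespace Module.End

theorem eigenspace_symm_inv (g : V ≃ₗ[K] V) (μ : K) :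
    eigenspace (g.symm : End K V) μ⁻¹ = eigenspace (g : End K V) μ := by
  ext v
  simp only [mem_eigenspace_iff, LinearEquiv.coe_coe]
  rcases eq_or_ne μ 0 with rfl | hμ
  · simp
  · rw [LinearEquiv.symm_apply_eq, map_smul, eq_inv_smul_iff₀ hμ, eq_comm]

theorem map_eigenspace_of_comp_eq (e : V ≃ₗ[K] W) {f : End K V} {f' : End K W}
    (h : e.toLinearMap ∘ₗ f = f' ∘ₗ e.toLinearMap) (μ : K) :
    (eigenspace f μ).map e.toLinearMap = eigenspace f' μ := by
  ext w
  have hw : e (f (e.symm w)) = f' w := by simpa using LinearMap.congr_fun h (e.symm w)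
  rw [Submodule.mem_map_equiv, mem_eigenspace_iff, mem_eigenspace_iff, ← e.injective.eq_iff,
    map_smul, e.apply_symm_apply, hw]

theorem iSup_eigenspace_tensorProduct_map_eq_top {f : End K V} {k : End K W}
    (hf : ⨆ μ, f.eigenspace μ = ⊤) (hk : ⨆ μ, k.eigenspace μ = ⊤) :
    ⨆ μ, eigenspace (TensorProduct.map f k) μ = ⊤ := by
  rw [eq_top_iff, ← map₂_mk_top_top_eq_top, ← hf, ← hk, Submodule.map₂_iSup_left]
  refine iSup_le fun μ ↦ ?_
  rw [Submodule.map₂_iSup_right]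
  refine iSup_le fun ν ↦ le_trans ?_ (le_iSup _ (μ * ν))
  refine Submodule.map₂_le.2 fun v hv w hw ↦ ?_
  rw [mk_apply, mem_eigenspace_iff, map_tmul, mem_eigenspace_iff.1 hv, mem_eigenspace_iff.1 hw,
    smul_tmul_smul]

variable [FiniteDimensional K V] [FiniteDimensional K W]

theorem finrank_eigenspace_dualMap (f : End K V) (μ : K) :
    finrank K (eigenspace f.dualMap μ) = finrank K (eigenspace f μ) := by
  have hdual : f.dualMap - μ • 1 = (f - μ • 1).dualMap := by ext; simp
  rw [eigenspace_def, eigenspace_def, hdual]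
  have := (f - μ • 1).finrank_range_add_finrank_ker
  have := (f - μ • 1).dualMap.finrank_range_add_finrank_ker
  have := (f - μ • 1).finrank_range_dualMap_eq_finrank_range
  have : finrank K (Dual K V) = finrank K V := Subspace.dual_finrank_eq
  omega

theorem finrank_eigenspace_inv_of_isometry {B : V →ₗ[K] V →ₗ[K] K} (hB : B.SeparatingLeft)
    (g : V ≃ₗ[K] V) (hg : ∀ v w, B (g v) (g w) = B v w) (μ : K) :
    finrank K (eigenspace (g : End K V) μ⁻¹) = finrank K (eigenspace (g : End K V) μ) := by
  let Φ : V ≃ₗ[K] Dual K V := B.linearEquivOfInjective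
    (LinearMap.ker_eq_bot.1 (LinearMap.separatingLeft_iff_ker_eq_bot.1 hB))
    Subspace.dual_finrank_eq.symm
  have hΦ : Φ.toLinearMap ∘ₗ g = (g.symm : End K V).dualMap ∘ₗ Φ.toLinearMap := by
    ext v w
    simpa [Φ] using hg v (g.symm w)
  calc finrank K (eigenspace (g : End K V) μ⁻¹)
      = finrank K (eigenspace (g.symm : End K V) μ) := by
        rw [← eigenspace_symm_inv g.symm μ, LinearEquiv.symm_symm]
    _ = finrank K (eigenspace (g.symm : End K V).dualMap μ) :=
        (finrank_eigenspace_dualMap _ μ).symm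
    _ = finrank K (eigenspace (g : End K V) μ) := by
        rw [← map_eigenspace_of_comp_eq Φ hΦ, LinearEquiv.finrank_map_eq]

theorem det_eq_prod_pow_finrank_eigenspace (f : End K V) (hf : ⨆ μ, f.eigenspace μ = ⊤) :
    LinearMap.det f =
      ∏ μ ∈ f.finite_hasEigenvalue.toFinset, μ ^ finrank K (f.eigenspace μ) := by
  classical
  set S := f.finite_hasEigenvalue.toFinset
  have hsup : ⨆ μ : S, f.eigenspace μ = ⊤ := by
    refine eq_top_iff.2 (hf ▸ iSup_le fun μ ↦ ?_)
    by_cases hμ : f.HasEigenvalue μ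
    · exact le_iSup (fun μ : S ↦ f.eigenspace μ) ⟨μ, by simpa [S] using hμ⟩
    · simp [not_not.1 (hasEigenvalue_iff.not.1 hμ)]
  have hint : DirectSum.IsInternal fun μ : S ↦ f.eigenspace μ :=
    DirectSum.isInternal_submodule_of_iSupIndep_of_iSup_eq_top
      (f.eigenspaces_iSupIndep.comp Subtype.val_injective) hsup
  let b := hint.collectedBasis fun μ ↦ Module.Free.chooseBasis K (f.eigenspace μ)
  rw [LinearMap.det_eq_prod_of_apply_basis_eq_smul b f (fun i ↦ i.1)
      fun i ↦ mem_eigenspace_iff.1 (hint.collectedBasis_mem _ i),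
    Fintype.prod_sigma, ← Finset.prod_coe_sort S]
  simp [Finset.prod_const, Module.finrank_eq_card_chooseBasisIndex]

theorem even_finrank_eigenspace_neg_one (hK : (-1 : K) ≠ 1) (f : End K V)
    (hf : ⨆ μ, f.eigenspace μ = ⊤) (hdet : LinearMap.det f = 1)
    (hsymm : ∀ μ, finrank K (f.eigenspace μ⁻¹) = finrank K (f.eigenspace μ)) :
    Even (finrank K (f.eigenspace (-1))) := by
  classical
  set S := f.finite_hasEigenvalue.toFinset
  have hS : ∀ μ, μ ∈ S ↔ finrank K (f.eigenspace μ) ≠ 0 := by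
    simp [S, hasEigenvalue_iff, Submodule.finrank_eq_zero]
  have hprod := f.det_eq_prod_pow_finrank_eigenspace hf
  by_cases hneg : (-1 : K) ∈ S
  swap
  · rw [hS, not_not] at hneg
    simp [hneg]
  have h0 : (0 : K) ∉ S := fun h ↦ one_ne_zero <| by
    rw [← hdet, hprod]
    exact Finset.prod_eq_zero h (zero_pow ((hS 0).1 h))
  rw [← Finset.mul_prod_erase S _ hneg, Finset.prod_pow_erase_neg_one_eq_one_of_inv S _ h0
    (fun μ hμ ↦ (hS _).2 (hsymm μ ▸ (hS μ).1 hμ)) fun μ _ ↦ hsymm μ, mul_one, hdet] at hprod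
  exact (neg_one_pow_eq_one_iff_even hK).1 hprod.symm

end Module.End

theorem LinearMap.det_tensorProduct_map [FiniteDimensional K V] [FiniteDimensional K W]
    (f : Module.End K V) (k : Module.End K W) :
    LinearMap.det (TensorProduct.map f k) =
      LinearMap.det f ^ finrank K W * LinearMap.det k ^ finrank K V := by
  classical
  let bV := Module.finBasis K V
  let bW := Module.finBasis K W
  rw [← det_toMatrix (bV.tensorProduct bW), TensorProduct.toMatrix_map, Matrix.det_kronecker,
    det_toMatrix, det_toMatrix, Fintype.card_fin, Fintype.card_fin]

namespace LinearMap.BilinForm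

theorem separatingLeft_tmul [FiniteDimensional K V] [FiniteDimensional K W]
    {B : LinearMap.BilinForm K V} {B' : LinearMap.BilinForm K W} (hB : B.SeparatingLeft)
    (hB' : B'.SeparatingLeft) :
    (B.tmul B').SeparatingLeft := by
  have h : B.tmul B' = dualDistrib K V W ∘ₗ TensorProduct.map B B' := by
    ext; simp [mul_comm]
  rw [separatingLeft_iff_ker_eq_bot, ker_eq_bot, h]
  exact (dualDistribEquiv K V W).injective.comp <| map_injective_of_flat_flat _ _
    (ker_eq_bot.1 (separatingLeft_iff_ker_eq_bot.1 hB))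
    (ker_eq_bot.1 (separatingLeft_iff_ker_eq_bot.1 hB'))

theorem tmul_apply_map_map {B : LinearMap.BilinForm K V} {B' : LinearMap.BilinForm K W}
    {f : Module.End K V} {k : Module.End K W}
    (hf : ∀ v w, B (f v) (f w) = B v w) (hk : ∀ v w, B' (k v) (k w) = B' v w)
    (x y : V ⊗[K] W) :
    B.tmul B' (TensorProduct.map f k x) (TensorProduct.map f k y) = B.tmul B' x y := by
  have : (B.tmul B').compl₁₂ (TensorProduct.map f k) (TensorProduct.map f k) = B.tmul B' := by
    ext; simp [hf, hk]
  exact LinearMap.congr_fun₂ this x y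

end LinearMap.BilinForm

end

theorem dim_minus_one_eigenspace_tensor_even_of_special_general
    (V W : Type*) [AddCommGroup V] [Module ℂ V] [FiniteDimensional ℂ V]
    [AddCommGroup W] [Module ℂ W] [FiniteDimensional ℂ W]
    (BV : V →ₗ[ℂ] V →ₗ[ℂ] ℂ) (BW : W →ₗ[ℂ] W →ₗ[ℂ] ℂ)
    (hVnd : ∀ v : V, (∀ w : V, BV v w = 0) → v = 0)
    (hWnd : ∀ v : W, (∀ w : W, BW v w = 0) → v = 0)
    (g : V ≃ₗ[ℂ] V) (h : W ≃ₗ[ℂ] W)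
    (hdg : (⨆ μ : ℂ, Module.End.eigenspace (g : V →ₗ[ℂ] V) μ) = ⊤)
    (hdh : (⨆ μ : ℂ, Module.End.eigenspace (h : W →ₗ[ℂ] W) μ) = ⊤)
    (hgiso : ∀ v w : V, BV (g v) (g w) = BV v w)
    (hhiso : ∀ v w : W, BW (h v) (h w) = BW v w)
    (hgdet : LinearMap.det (g : V →ₗ[ℂ] V) = 1)
    (hhdet : LinearMap.det (h : W →ₗ[ℂ] W) = 1) :
    Even (Module.finrank ℂ
      (Module.End.eigenspace (TensorProduct.map (g : V →ₗ[ℂ] V) (h : W →ₗ[ℂ] W)) (-1))) := by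
  refine Module.End.even_finrank_eigenspace_neg_one (by norm_num) _
    (Module.End.iSup_eigenspace_tensorProduct_map_eq_top hdg hdh) ?_ ?_
  · rw [LinearMap.det_tensorProduct_map, hgdet, hhdet, one_pow, one_pow, one_mul]
  · exact Module.End.finrank_eigenspace_inv_of_isometry
      (LinearMap.BilinForm.separatingLeft_tmul hVnd hWnd) (TensorProduct.congr g h)
      (LinearMap.BilinForm.tmul_apply_map_map hgiso hhiso)

/-- Let `V` and `W` be finite-dimensional complex vector spaces with
nondegenerate symmetric bilinear forms, and `g, h` diagonalizable isometries of `V, W`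
respectively.  If `det g = 1` and `det h = 1`, then `dim E_{-1}(g ⊗ h)` is even. -/
theorem dim_minus_one_eigenspace_tensor_even_of_special
    (V W : Type*) [AddCommGroup V] [Module ℂ V] [FiniteDimensional ℂ V]
    [AddCommGroup W] [Module ℂ W] [FiniteDimensional ℂ W]
    (BV : V →ₗ[ℂ] V →ₗ[ℂ] ℂ) (BW : W →ₗ[ℂ] W →ₗ[ℂ] ℂ)
    (hVsymm : ∀ v w : V, BV v w = BV w v)
    (hVnd : ∀ v : V, (∀ w : V, BV v w = 0) → v = 0)
    (hWsymm : ∀ v w : W, BW v w = BW w v)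
    (hWnd : ∀ v : W, (∀ w : W, BW v w = 0) → v = 0)
    (g : V ≃ₗ[ℂ] V) (h : W ≃ₗ[ℂ] W)
    (hdg : (⨆ μ : ℂ, Module.End.eigenspace (g : V →ₗ[ℂ] V) μ) = ⊤)
    (hdh : (⨆ μ : ℂ, Module.End.eigenspace (h : W →ₗ[ℂ] W) μ) = ⊤)
    (hgiso : ∀ v w : V, BV (g v) (g w) = BV v w)
    (hhiso : ∀ v w : W, BW (h v) (h w) = BW v w)
    (hgdet : LinearMap.det (g : V →ₗ[ℂ] V) = 1)
    (hhdet : LinearMap.det (h : W →ₗ[ℂ] W) = 1) :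
    Even (Module.finrank ℂ
      (Module.End.eigenspace (TensorProduct.map (g : V →ₗ[ℂ] V) (h : W →ₗ[ℂ] W)) (-1))) :=
  dim_minus_one_eigenspace_tensor_even_of_special_general V W BV BW hVnd hWnd g h hdg hdh hgiso
    hhiso hgdet hhdet
end

section
/- Let V be a finite-dimensional complex vector space with a nondegenerate symmetric bilinear form and W a finite-dimensional complex vector space with a nondegenerate alternating bilinear form. Let g and h be diagonalizable linear automorphisms of V and W that are isometries of the respective forms. Then dim E_{−1}(g ⊗ h) is even. -/
/-!
The form `B_V ⊗ B_W` on `V ⊗ W` is alternating (symmetric times alternating) and nondegenerate,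
and `g ⊗ h` is a diagonalizable isometry of it. Eigenvectors of an isometry for eigenvalues
`a`, `b` are orthogonal unless `a * b = 1`, so the form stays nondegenerate on `E_{-1}(g ⊗ h)`.
A nondegenerate alternating form lives only in even dimension: its Gram matrix `M` satisfies
`Mᵀ = -M`, hence `det M = (-1)ⁿ det M` with `det M ≠ 0`.
-/

open Module TensorProduct
open LinearMap (BilinForm)
open Module.End (eigenspace)
open scoped Kronecker

namespace LinearMap.BilinForm

variable {K V : Type*} [Field K] [AddCommGroup V] [Module K V] [FiniteDimensional K V]

theorem even_finrank_of_isAlt_of_separatingLeft (hK : ringChar K ≠ 2) {B : BilinForm K V}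
    (halt : B.IsAlt) (hsep : B.SeparatingLeft) : Even (finrank K V) := by
  let b := finBasis K V
  have hskew : (toMatrix₂ b b B).transpose = -toMatrix₂ b b B := by
    ext i j
    simp only [Matrix.transpose_apply, Matrix.neg_apply, toMatrix₂_apply, halt.neg_eq]
  have hdet : (toMatrix₂ b b B).det ≠ 0 := (separatingLeft_iff_det_ne_zero b).mp hsep
  have hpow : (-1 : K) ^ finrank K V = 1 := by
    have := congrArg Matrix.det hskew
    rw [Matrix.det_transpose, Matrix.det_neg, Fintype.card_fin] at this
    exact (mul_eq_right₀ hdet).mp this.symm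
  exact (neg_one_pow_eq_one_iff_even (Ring.neg_one_ne_one_of_char_ne_two hK)).mp hpow

end LinearMap.BilinForm

namespace LinearMap

section Tensor

variable {R M₁ M₂ : Type*} [CommRing R] [AddCommGroup M₁] [Module R M₁]
  [AddCommGroup M₂] [Module R M₂] {B₁ : BilinForm R M₁} {B₂ : BilinForm R M₂}

attribute [local ext] TensorProduct.ext in
theorem IsAlt.tmul_of_isSymm (h₁ : B₁.IsSymm) (h₂ : B₂.IsAlt) : (B₁.tmul B₂).IsAlt := by
  have hskew : (B₁.tmul B₂).flip = -B₁.tmul B₂ := by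
    ext x₁ x₂ y₁ y₂
    simp [h₁.eq x₁ y₁, ← h₂.neg_eq x₂ y₂]
  intro x
  induction x using TensorProduct.induction_on with
  | zero => simp
  | tmul x₁ x₂ => simp [h₂.self_eq_zero x₂]
  | add x y hx hy =>
    have hyx : B₁.tmul B₂ y x = -B₁.tmul B₂ x y := congr($hskew x y)
    simp [hx, hy, hyx]

theorem IsOrthogonal.tmul {f₁ : Module.End R M₁} {f₂ : Module.End R M₂}
    (hf₁ : B₁.IsOrthogonal f₁) (hf₂ : B₂.IsOrthogonal f₂) :
    (B₁.tmul B₂).IsOrthogonal (map f₁ f₂) := by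
  suffices (B₁.tmul B₂).compl₁₂ (map f₁ f₂) (map f₁ f₂) = B₁.tmul B₂ from
    fun x y => congr($this x y)
  ext x₁ x₂ y₁ y₂
  simp [hf₁ x₁ y₁, hf₂ x₂ y₂]

end Tensor

variable {K V W : Type*} [Field K] [AddCommGroup V] [Module K V] [FiniteDimensional K V]
  [AddCommGroup W] [Module K W] [FiniteDimensional K W]

theorem SeparatingLeft.tmul {B₁ : BilinForm K V} {B₂ : BilinForm K W}
    (h₁ : B₁.SeparatingLeft) (h₂ : B₂.SeparatingLeft) : (B₁.tmul B₂).SeparatingLeft := by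
  let b₁ := finBasis K V
  let b₂ := finBasis K W
  have hmat : LinearMap.toMatrix₂ (b₁.tensorProduct b₂) (b₁.tensorProduct b₂) (B₁.tmul B₂) =
      LinearMap.toMatrix₂ b₁ b₁ B₁ ⊗ₖ LinearMap.toMatrix₂ b₂ b₂ B₂ := by
    ext ⟨i₁, i₂⟩ ⟨j₁, j₂⟩
    simp [Basis.tensorProduct_apply, mul_comm]
  rw [separatingLeft_iff_det_ne_zero (b₁.tensorProduct b₂), hmat, Matrix.det_kronecker]
  exact mul_ne_zero (pow_ne_zero _ ((separatingLeft_iff_det_ne_zero b₁).mp h₁))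
    (pow_ne_zero _ ((separatingLeft_iff_det_ne_zero b₂).mp h₂))

end LinearMap

namespace Module.End

variable {K V W : Type*} [Field K] [AddCommGroup V] [Module K V] [AddCommGroup W] [Module K W]

theorem tmul_mem_eigenspace_map {f : End K V} {g : End K W} {a b : K} {v : V} {w : W}
    (hv : v ∈ eigenspace f a) (hw : w ∈ eigenspace g b) :
    v ⊗ₜ w ∈ eigenspace (map f g) (a * b) := by
  rw [mem_eigenspace_iff] at hv hw ⊢
  rw [map_tmul, hv, hw, smul_tmul_smul]

theorem iSup_eigenspace_map_eq_top {f : End K V} {g : End K W}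
    (hf : ⨆ a, eigenspace f a = ⊤) (hg : ⨆ b, eigenspace g b = ⊤) :
    ⨆ c, eigenspace (map f g) c = ⊤ := by
  rw [eq_top_iff, ← map₂_mk_top_top_eq_top, ← hf, ← hg, Submodule.map₂_iSup_left]
  refine iSup_le fun a => ?_
  rw [Submodule.map₂_iSup_right]
  exact iSup_le fun b => Submodule.map₂_le.mpr fun v hv w hw =>
    Submodule.mem_iSup_of_mem (a * b) (tmul_mem_eigenspace_map hv hw)

end Module.End

namespace LinearMap.IsOrthogonal

variable {K V : Type*} [Field K] [AddCommGroup V] [Module K V] {B : BilinForm K V}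
  {f : Module.End K V}

theorem apply_eq_zero_of_mem_eigenspace (hf : B.IsOrthogonal f) {a b : K} {x y : V}
    (hx : x ∈ eigenspace f a) (hy : y ∈ eigenspace f b) (hab : a * b ≠ 1) : B x y = 0 := by
  have h : a * b * B x y = B x y := calc
    a * b * B x y = B (f x) (f y) := by
      rw [Module.End.mem_eigenspace_iff.mp hx, Module.End.mem_eigenspace_iff.mp hy]
      simp only [map_smul, LinearMap.smul_apply, smul_eq_mul]
      ring
    _ = B x y := hf x y
  by_contra hxy
  exact hab ((mul_eq_right₀ hxy).mp h)

theorem separatingLeft_restrict_eigenspace (hf : B.IsOrthogonal f) (hB : B.SeparatingLeft)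
    (hdiag : ⨆ a, eigenspace f a = ⊤) {a : K} (ha : a * a = 1) :
    (B.restrict (eigenspace f a)).SeparatingLeft := by
  rintro ⟨x, hx⟩ hx0
  suffices B x = 0 from Subtype.ext (hB x fun y => congr($this y))
  rw [← LinearMap.ker_eq_top, eq_top_iff, ← hdiag]
  refine iSup_le fun b y hy => ?_
  by_cases hb : b = a
  · subst hb
    exact hx0 ⟨y, hy⟩
  · refine hf.apply_eq_zero_of_mem_eigenspace hx hy fun hab => hb ?_
    calc b = a * a * b := by rw [ha, one_mul]
      _ = a := by rw [mul_assoc, hab, mul_one]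

end LinearMap.IsOrthogonal

/-- Let `V` be a finite-dimensional complex vector space with a
nondegenerate symmetric bilinear form and `W` a finite-dimensional complex vector space
with a nondegenerate alternating bilinear form.  If `g` and `h` are diagonalizable
isometries of `V` and `W` respectively, then `dim E_{-1}(g ⊗ h)` is even. -/
theorem dim_minus_one_eigenspace_orth_tensor_symp_even
    (V W : Type*) [AddCommGroup V] [Module ℂ V] [FiniteDimensional ℂ V]
    [AddCommGroup W] [Module ℂ W] [FiniteDimensional ℂ W]
    (BV : V →ₗ[ℂ] V →ₗ[ℂ] ℂ) (BW : W →ₗ[ℂ] W →ₗ[ℂ] ℂ)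
    (hVsymm : ∀ v w : V, BV v w = BV w v)
    (hVnd : ∀ v : V, (∀ w : V, BV v w = 0) → v = 0)
    (hWalt : ∀ v : W, BW v v = 0)
    (hWnd : ∀ v : W, (∀ w : W, BW v w = 0) → v = 0)
    (g : V ≃ₗ[ℂ] V) (h : W ≃ₗ[ℂ] W)
    (hdg : (⨆ μ : ℂ, Module.End.eigenspace (g : V →ₗ[ℂ] V) μ) = ⊤)
    (hdh : (⨆ μ : ℂ, Module.End.eigenspace (h : W →ₗ[ℂ] W) μ) = ⊤)
    (hgiso : ∀ v w : V, BV (g v) (g w) = BV v w)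
    (hhiso : ∀ v w : W, BW (h v) (h w) = BW v w) :
    Even (Module.finrank ℂ
      (Module.End.eigenspace (TensorProduct.map (g : V →ₗ[ℂ] V) (h : W →ₗ[ℂ] W)) (-1))) := by
  have hB_alt : (BilinForm.tmul BV BW).IsAlt := LinearMap.IsAlt.tmul_of_isSymm ⟨hVsymm⟩ hWalt
  have hB_sep : (BilinForm.tmul BV BW).SeparatingLeft := LinearMap.SeparatingLeft.tmul hVnd hWnd
  have hk_orth : (BilinForm.tmul BV BW).IsOrthogonal (map (g : V →ₗ[ℂ] V) (h : W →ₗ[ℂ] W)) :=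
    LinearMap.IsOrthogonal.tmul hgiso hhiso
  have hk_diag := Module.End.iSup_eigenspace_map_eq_top hdg hdh
  exact BilinForm.even_finrank_of_isAlt_of_separatingLeft (by simp [ringChar.eq_zero])
    (fun x => hB_alt x) (hk_orth.separatingLeft_restrict_eigenspace hB_sep hk_diag (by norm_num))
end

section
/- Let V and W be finite-dimensional complex vector spaces each equipped with a nondegenerate alternating bilinear form, and let g and h be diagonalizable linear automorphisms of V and W that are isometries of the respective forms. Then dim E_{−1}(g ⊗ h) is even. -/
open TensorProduct

/-!
In eigenbases `(bᵢ)` of `g` and `(cⱼ)` of `h`, the vectors `bᵢ ⊗ cⱼ` form an eigenbasis of `g ⊗ h`,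
so `dim E₋₁(g ⊗ h) = ∑_λ dim E_λ(g) · dim E_{-λ⁻¹}(h)`. An isometry of a nondegenerate form pairs
`E_λ` perfectly with `E_{λ⁻¹}`, so both dimension functions are invariant under `λ ↦ λ⁻¹`, which
therefore permutes the terms of the sum in equal pairs. The fixed points `λ = ±1` contribute even
terms, because the alternating form of `V` restricts to a nondegenerate alternating form on
`E_{±1}(g)`.
-/

open Finset Module

theorem even_sum_of_involution {α : Type*} {s : Finset α} {f : α → ℕ} (σ : α → α)
    (hσs : ∀ a ∈ s, σ a ∈ s) (hσσ : ∀ a ∈ s, σ (σ a) = a) (hfσ : ∀ a ∈ s, f (σ a) = f a)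
    (hfix : ∀ a ∈ s, σ a = a → Even (f a)) : Even (∑ a ∈ s, f a) := by
  rw [even_iff_two_dvd, ← ZMod.natCast_eq_zero_iff, Nat.cast_sum]
  refine sum_involution (fun a _ ↦ σ a) (fun a ha ↦ ?_) (fun a ha hne hfixed ↦ hne ?_) hσs hσσ
  · rw [hfσ a ha]
    exact CharTwo.add_self_eq_zero _
  · obtain ⟨k, hk⟩ := hfix a ha hfixed
    rw [hk, Nat.cast_add]
    exact CharTwo.add_self_eq_zero _

theorem card_filter_mul_eq_sum {ι κ K : Type*} [Fintype ι] [Fintype κ] [Mul K] [DecidableEq K]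
    (α : ι → K) (β : κ → K) (ν : K) :
    #{p : ι × κ | α p.1 * β p.2 = ν} =
      ∑ c ∈ univ.image α, #{i | α i = c} * #{j | c * β j = ν} := by
  rw [card_eq_sum_card_fiberwise (f := fun p ↦ α p.1) (t := univ.image α)
    (fun p _ ↦ mem_image_of_mem α (mem_univ _))]
  refine sum_congr rfl fun c _ ↦ ?_
  rw [← card_product]
  congr 1
  ext ⟨i, j⟩
  simp only [mem_filter, mem_univ, true_and, mem_product]
  constructor
  · rintro ⟨h, rfl⟩; exact ⟨rfl, h⟩
  · rintro ⟨rfl, h⟩; exact ⟨h, rfl⟩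

theorem even_card_mul_eq_of_inv_symmetric {ι κ K : Type*} [Fintype ι] [Fintype κ] [Field K]
    [DecidableEq K] {α : ι → K} {β : κ → K}
    (hα : ∀ c, #{i | α i = c⁻¹} = #{i | α i = c}) (hβ : ∀ c, #{j | β j = c⁻¹} = #{j | β j = c})
    (hα_even : ∀ c, c * c = 1 → Even #{i | α i = c}) {ν : K} (hν : ν * ν = 1) :
    Even #{p : ι × κ | α p.1 * β p.2 = ν} := by
  have mem_image_iff : ∀ c, c ∈ univ.image α ↔ 0 < #{i | α i = c} := by
    simp [card_pos, filter_nonempty_iff]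
  have hν0 : ν ≠ 0 := left_ne_zero_of_mul_eq_one hν
  have hνinv : ν⁻¹ = ν := inv_eq_of_mul_eq_one_right hν
  rw [card_filter_mul_eq_sum]
  refine even_sum_of_involution (·⁻¹) (fun c hc ↦ ?_) (fun c _ ↦ inv_inv c) (fun c _ ↦ ?_)
    (fun c _ hc ↦ ?_)
  · rwa [mem_image_iff, hα, ← mem_image_iff]
  · rw [hα]
    congr 1
    rcases eq_or_ne c 0 with rfl | hc
    · simp
    calc #{j | c⁻¹ * β j = ν} = #{j | β j = c * ν} := by
          simp_rw [inv_mul_eq_iff_eq_mul₀ hc]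
      _ = #{j | β j = c⁻¹ * ν} := by rw [← hβ, mul_inv, hνinv]
      _ = #{j | c * β j = ν} := by simp_rw [eq_inv_mul_iff_mul_eq₀ hc]
  · -- `0⁻¹ = 0` makes `c = 0` a fixed point; its term vanishes because `ν ≠ 0`.
    rcases eq_or_ne c 0 with rfl | hc0
    · simp [hν0.symm]
    · refine (hα_even c ?_).mul_right _
      nth_rw 1 [← hc]
      exact inv_mul_cancel₀ hc0

theorem LinearMap.BilinForm.even_finrank_of_isAlt_of_separatingLeft_s13 {K V : Type*} [Field K]
    [NeZero (2 : K)] [AddCommGroup V] [Module K V] [FiniteDimensional K V]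
    {B : LinearMap.BilinForm K V} (hB : B.IsAlt) (hsep : B.SeparatingLeft) :
    Even (finrank K V) := by
  let A := toMatrix (finBasis K V) B
  have hdet : A.det ≠ 0 := (nondegenerate_iff_det_ne_zero _).mp
    ((LinearMap.IsAlt.isRefl hB).nondegenerate_iff_separatingLeft.mpr hsep)
  have hskew : A.transpose = -A := by
    ext i j
    change toMatrix _ B j i = -toMatrix _ B i j
    rw [toMatrix_apply, toMatrix_apply, LinearMap.IsAlt.neg hB]
  have hpow : (-1 : K) ^ finrank K V = 1 := by
    refine mul_right_cancel₀ hdet ?_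
    calc (-1) ^ finrank K V * A.det = (-A).det := by rw [Matrix.det_neg, Fintype.card_fin]
      _ = 1 * A.det := by rw [← hskew, Matrix.det_transpose, one_mul]
  have hK : (-1 : K) ≠ 1 := fun h ↦ two_ne_zero (by linear_combination -h : (2 : K) = 0)
  exact (neg_one_pow_eq_one_iff_even hK).mp hpow

theorem LinearMap.SeparatingLeft.finrank_le {K M N : Type*} [Field K] [AddCommGroup M]
    [Module K M] [AddCommGroup N] [Module K N] [FiniteDimensional K N]
    {B : M →ₗ[K] N →ₗ[K] K} (hB : B.SeparatingLeft) : finrank K M ≤ finrank K N :=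
  (LinearMap.finrank_le_finrank_of_injective
    (LinearMap.ker_eq_bot.mp (LinearMap.separatingLeft_iff_ker_eq_bot.mp hB))).trans_eq
    Subspace.dual_finrank_eq

namespace Module.End

variable {K V : Type*} [Field K] [AddCommGroup V] [Module K V]
  {B : LinearMap.BilinForm K V} {f : End K V}

theorem apply_eq_zero_of_mem_eigenspace_of_mul_ne_one (hf : B.IsOrthogonal f) {a b : K}
    (hab : a * b ≠ 1) {x y : V} (hx : x ∈ f.eigenspace a) (hy : y ∈ f.eigenspace b) :
    B x y = 0 := by
  have h : b * (a * B x y) = B x y := by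
    simpa [mem_eigenspace_iff.mp hx, mem_eigenspace_iff.mp hy] using hf x y
  rw [← mul_assoc, mul_comm b a] at h
  by_contra hxy
  exact hab ((mul_eq_right₀ hxy).mp h)

theorem separatingLeft_domRestrict₁₂_eigenspace_inv (hsep : B.SeparatingLeft)
    (hf : B.IsOrthogonal f) (hdiag : ⨆ μ, f.eigenspace μ = ⊤) (a : K) :
    (B.domRestrict₁₂ (f.eigenspace a) (f.eigenspace a⁻¹)).SeparatingLeft := by
  rintro ⟨x, hx⟩ hxy
  refine Subtype.ext (hsep x fun w ↦ ?_)
  have hw : w ∈ ⨆ μ, f.eigenspace μ := hdiag ▸ Submodule.mem_top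
  induction hw using Submodule.iSup_induction' with
  | mem b y hy =>
    by_cases hab : a * b = 1
    · rw [eq_inv_of_mul_eq_one_right hab] at hy
      exact hxy ⟨y, hy⟩
    · exact apply_eq_zero_of_mem_eigenspace_of_mul_ne_one hf hab hx hy
  | zero => simp
  | add y z _ _ hy hz => simp [hy, hz]

theorem finrank_eigenspace_le_inv [FiniteDimensional K V] (hsep : B.SeparatingLeft)
    (hf : B.IsOrthogonal f) (hdiag : ⨆ μ, f.eigenspace μ = ⊤) (a : K) :
    finrank K (f.eigenspace a) ≤ finrank K (f.eigenspace a⁻¹) :=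
  (separatingLeft_domRestrict₁₂_eigenspace_inv hsep hf hdiag a).finrank_le

theorem finrank_eigenspace_inv [FiniteDimensional K V] (hsep : B.SeparatingLeft)
    (hf : B.IsOrthogonal f) (hdiag : ⨆ μ, f.eigenspace μ = ⊤) (a : K) :
    finrank K (f.eigenspace a⁻¹) = finrank K (f.eigenspace a) := by
  refine le_antisymm ?_ (finrank_eigenspace_le_inv hsep hf hdiag a)
  have h := finrank_eigenspace_le_inv hsep hf hdiag a⁻¹
  rwa [inv_inv] at h

theorem even_finrank_eigenspace_of_mul_self_eq_one [NeZero (2 : K)] [FiniteDimensional K V]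
    (hB : B.IsAlt) (hsep : B.SeparatingLeft) (hf : B.IsOrthogonal f)
    (hdiag : ⨆ μ, f.eigenspace μ = ⊤) {a : K} (ha : a * a = 1) :
    Even (finrank K (f.eigenspace a)) := by
  have hsep' := separatingLeft_domRestrict₁₂_eigenspace_inv hsep hf hdiag a
  rw [inv_eq_of_mul_eq_one_right ha] at hsep'
  exact LinearMap.BilinForm.even_finrank_of_isAlt_of_separatingLeft_s13 (fun x ↦ hB x) hsep'

theorem exists_basis_of_iSup_eigenspace_eq_top_s13 [FiniteDimensional K V]
    (hdiag : ⨆ μ, f.eigenspace μ = ⊤) :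
    ∃ (b : Basis (Fin (finrank K V)) K V) (α : Fin (finrank K V) → K),
      ∀ i, f (b i) = α i • b i := by
  classical
  have hint : DirectSum.IsInternal fun μ ↦ f.eigenspace μ :=
    (DirectSum.isInternal_submodule_iff_iSupIndep_and_iSup_eq_top _).mpr
      ⟨f.eigenspaces_iSupIndep, hdiag⟩
  let c := hint.collectedBasis fun μ ↦ Free.chooseBasis K (f.eigenspace μ)
  let e := c.indexEquiv (finBasis K V)
  refine ⟨c.reindex e, fun i ↦ (e.symm i).1, fun i ↦ ?_⟩
  rw [Basis.reindex_apply]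
  exact mem_eigenspace_iff.mp (hint.collectedBasis_mem _ _)

theorem finrank_eigenspace_eq_card_of_basis {ι : Type*} [Fintype ι] [DecidableEq K]
    (b : Basis ι K V) {α : ι → K} (hb : ∀ i, f (b i) = α i • b i) (ν : K) :
    finrank K (f.eigenspace ν) = #{i | α i = ν} := by
  have repr_apply : ∀ x i, b.repr (f x) i = α i * b.repr x i := fun x i ↦
    LinearMap.congr_fun (b.ext (f₁ := b.coord i ∘ₗ f) (f₂ := α i • b.coord i) fun j ↦ by
      rcases eq_or_ne i j with rfl | hij
      · simp [hb]
      · simp [hb, Finsupp.single_eq_of_ne hij]) x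
  have hmap : (f.eigenspace ν).map b.repr.toLinearMap = Finsupp.supported K K {i | α i = ν} := by
    ext c
    rw [Submodule.mem_map_equiv, mem_eigenspace_iff, ← b.repr.injective.eq_iff,
      Finsupp.mem_supported', Finsupp.ext_iff]
    refine forall_congr' fun i ↦ ?_
    simp only [repr_apply, LinearEquiv.apply_symm_apply, map_smul, Finsupp.smul_apply,
      smul_eq_mul, mul_eq_mul_right_iff]
    tauto
  rw [← LinearEquiv.finrank_map_eq b.repr, hmap, (Finsupp.supportedEquivFinsupp _).finrank_eq,
    finrank_finsupp_self, Fintype.card_ofFinset]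
  rfl

end Module.End

theorem TensorProduct.finrank_eigenspace_map_eq_card {K V W ι κ : Type*} [Field K]
    [AddCommGroup V] [Module K V] [AddCommGroup W] [Module K W] [Fintype ι] [Fintype κ]
    [DecidableEq K] {f : End K V} {g : End K W} (b : Basis ι K V) (c : Basis κ K W)
    {α : ι → K} {β : κ → K} (hb : ∀ i, f (b i) = α i • b i) (hc : ∀ j, g (c j) = β j • c j)
    (ν : K) :
    finrank K (End.eigenspace (map f g) ν) = #{p : ι × κ | α p.1 * β p.2 = ν} :=
  End.finrank_eigenspace_eq_card_of_basis (b.tensorProduct c) (α := fun p ↦ α p.1 * β p.2)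
    (fun p ↦ by rw [Basis.tensorProduct_apply', map_tmul, hb, hc, smul_tmul_smul]) ν

theorem even_finrank_eigenspace_map_of_isOrthogonal {K V W : Type*} [Field K] [NeZero (2 : K)]
    [AddCommGroup V] [Module K V] [FiniteDimensional K V]
    [AddCommGroup W] [Module K W] [FiniteDimensional K W]
    {BV : LinearMap.BilinForm K V} {BW : LinearMap.BilinForm K W} {f : End K V} {g : End K W}
    (hBV : BV.IsAlt) (hBVsep : BV.SeparatingLeft) (hBWsep : BW.SeparatingLeft)
    (hf : BV.IsOrthogonal f) (hg : BW.IsOrthogonal g)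
    (hfdiag : ⨆ μ, f.eigenspace μ = ⊤) (hgdiag : ⨆ μ, g.eigenspace μ = ⊤)
    {ν : K} (hν : ν * ν = 1) :
    Even (finrank K (End.eigenspace (map f g) ν)) := by
  classical
  obtain ⟨b, α, hb⟩ := End.exists_basis_of_iSup_eigenspace_eq_top_s13 hfdiag
  obtain ⟨c, β, hc⟩ := End.exists_basis_of_iSup_eigenspace_eq_top_s13 hgdiag
  have count_f := End.finrank_eigenspace_eq_card_of_basis b hb
  have count_g := End.finrank_eigenspace_eq_card_of_basis c hc
  rw [finrank_eigenspace_map_eq_card b c hb hc]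
  refine even_card_mul_eq_of_inv_symmetric (fun a ↦ ?_) (fun a ↦ ?_) (fun a ha ↦ ?_) hν
  · rw [← count_f, ← count_f, End.finrank_eigenspace_inv hBVsep hf hfdiag]
  · rw [← count_g, ← count_g, End.finrank_eigenspace_inv hBWsep hg hgdiag]
  · rw [← count_f]
    exact End.even_finrank_eigenspace_of_mul_self_eq_one hBV hBVsep hf hfdiag ha

theorem dim_minus_one_eigenspace_symp_tensor_symp_even_general
    (V W : Type*) [AddCommGroup V] [Module ℂ V] [FiniteDimensional ℂ V]
    [AddCommGroup W] [Module ℂ W] [FiniteDimensional ℂ W]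
    (BV : V →ₗ[ℂ] V →ₗ[ℂ] ℂ) (BW : W →ₗ[ℂ] W →ₗ[ℂ] ℂ)
    (hValt : ∀ v : V, BV v v = 0)
    (hVnd : ∀ v : V, (∀ w : V, BV v w = 0) → v = 0)
    (hWnd : ∀ v : W, (∀ w : W, BW v w = 0) → v = 0)
    (g : V ≃ₗ[ℂ] V) (h : W ≃ₗ[ℂ] W)
    (hdg : (⨆ μ : ℂ, Module.End.eigenspace (g : V →ₗ[ℂ] V) μ) = ⊤)
    (hdh : (⨆ μ : ℂ, Module.End.eigenspace (h : W →ₗ[ℂ] W) μ) = ⊤)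
    (hgiso : ∀ v w : V, BV (g v) (g w) = BV v w)
    (hhiso : ∀ v w : W, BW (h v) (h w) = BW v w) :
    Even (Module.finrank ℂ
      (Module.End.eigenspace (TensorProduct.map (g : V →ₗ[ℂ] V) (h : W →ₗ[ℂ] W)) (-1))) :=
  even_finrank_eigenspace_map_of_isOrthogonal hValt hVnd hWnd hgiso hhiso hdg hdh
    (ν := -1) (by norm_num)

/-- Let `V` and `W` be finite-dimensional complex vector spaces, each
with a nondegenerate alternating bilinear form, and let `g, h` be diagonalizable
isometries of `V, W` respectively.  Then `dim E_{-1}(g ⊗ h)` is even. -/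
theorem dim_minus_one_eigenspace_symp_tensor_symp_even
    (V W : Type*) [AddCommGroup V] [Module ℂ V] [FiniteDimensional ℂ V]
    [AddCommGroup W] [Module ℂ W] [FiniteDimensional ℂ W]
    (BV : V →ₗ[ℂ] V →ₗ[ℂ] ℂ) (BW : W →ₗ[ℂ] W →ₗ[ℂ] ℂ)
    (hValt : ∀ v : V, BV v v = 0)
    (hVnd : ∀ v : V, (∀ w : V, BV v w = 0) → v = 0)
    (hWalt : ∀ v : W, BW v v = 0)
    (hWnd : ∀ v : W, (∀ w : W, BW v w = 0) → v = 0)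
    (g : V ≃ₗ[ℂ] V) (h : W ≃ₗ[ℂ] W)
    (hdg : (⨆ μ : ℂ, Module.End.eigenspace (g : V →ₗ[ℂ] V) μ) = ⊤)
    (hdh : (⨆ μ : ℂ, Module.End.eigenspace (h : W →ₗ[ℂ] W) μ) = ⊤)
    (hgiso : ∀ v w : V, BV (g v) (g w) = BV v w)
    (hhiso : ∀ v w : W, BW (h v) (h w) = BW v w) :
    Even (Module.finrank ℂ
      (Module.End.eigenspace (TensorProduct.map (g : V →ₗ[ℂ] V) (h : W →ₗ[ℂ] W)) (-1))) :=
  dim_minus_one_eigenspace_symp_tensor_symp_even_general V W BV BW hValt hVnd hWnd g h hdg hdh hgiso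
    hhiso
end
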